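/- Let u* be a convex function on ℝⁿ such that on an open set U, u* is tangent from above at 0 to P*(x) = max(a·xₙ, 0) with a > 0 (i.e., u* ≥ (a xₙ)₊ on U, u*(0) = 0), and suppose {u* = (a xₙ)₊} contains a ball of ℝⁿ centered at a point of {xₙ = 0} ∩ U. If additionally ∂u*(0) is contained in the xₙ-axis, then ∂u*(0) equals the segment [0, a eₙ] = {t a eₙ : 0 ≤ t ≤ 1}. -/

import Mathlib

/-! A subgradient of `u*` at `0` on the `xₙ`-axis has the form `b eₙ`. On the ball `B(z, ρ)`,
where `u* = (a xₙ)₊` and `zₙ = 0`, testing it at the points `z + c eₙ`, `|c| < ρ`, gives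
`b c ≤ (a c)₊`, i.e. `0 ≤ b ≤ a`. Conversely `0` and `a eₙ` are subgradients
because a convex function lying above a linear function near `0`, with equality at `0`, lies
above it everywhere (a local minimum of a convex function is global); the subgradient set is
convex, so it contains the whole segment. -/

open MeasureTheory

/-- The subgradient of a convex function `u` (relative to the domain `Ω`) at `x`. -/
def subgrad {n : ℕ} (u : EuclideanSpace ℝ (Fin n) → ℝ) (Ω : Set (EuclideanSpace ℝ (Fin n)))
    (x : EuclideanSpace ℝ (Fin n)) : Set (EuclideanSpace ℝ (Fin n)) :=
  {p | ∀ y ∈ Ω, u x + (inner ℝ p (y - x) : ℝ) ≤ u y}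

/-- The subgradient image `∂u(s)` of a set `s`. -/
def subgradImage {n : ℕ} (u : EuclideanSpace ℝ (Fin n) → ℝ) (Ω : Set (EuclideanSpace ℝ (Fin n)))
    (s : Set (EuclideanSpace ℝ (Fin n))) : Set (EuclideanSpace ℝ (Fin n)) :=
  ⋃ x ∈ s, subgrad u Ω x

open Filter Topology

theorem mem_Icc_of_forall_abs_lt_mul_le_max {a b ρ : ℝ} (ha : 0 ≤ a) (hρ : 0 < ρ)
    (h : ∀ c : ℝ, |c| < ρ → b * c ≤ max (a * c) 0) : b ∈ Set.Icc 0 a := by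
  have hpos := h (ρ / 2) (by rw [abs_of_pos (by positivity)]; linarith)
  have hneg := h (-(ρ / 2)) (by rw [abs_neg, abs_of_pos (by positivity)]; linarith)
  rw [max_eq_left (by positivity)] at hpos
  rw [max_eq_right (by nlinarith)] at hneg
  constructor <;> nlinarith

namespace EuclideanSpace

variable {ι : Type*} [DecidableEq ι]

theorem eq_smul_single_of_apply_eq_zero {p : EuclideanSpace ℝ ι} {j : ι}
    (hp : ∀ i, i ≠ j → p i = 0) : p = p j • EuclideanSpace.single j 1 := by
  ext i
  by_cases hij : i = j
  · subst hij; simp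
  · simp [hij, hp i hij]

theorem inner_smul_single_one_left [Fintype ι] (j : ι) (a : ℝ) (y : EuclideanSpace ℝ ι) :
    inner ℝ (a • EuclideanSpace.single j 1) y = a * y j := by
  simp [real_inner_smul_left, EuclideanSpace.inner_single_left]

end EuclideanSpace

section Subgradient

variable {n : ℕ}

theorem convex_subgrad (u : EuclideanSpace ℝ (Fin n) → ℝ) (Ω : Set (EuclideanSpace ℝ (Fin n)))
    (x : EuclideanSpace ℝ (Fin n)) : Convex ℝ (subgrad u Ω x) := by
  intro p hp q hq s t hs ht hst y hy
  have hp' := mul_le_mul_of_nonneg_left (hp y hy) hs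
  have hq' := mul_le_mul_of_nonneg_left (hq y hy) ht
  rw [inner_add_left, real_inner_smul_left, real_inner_smul_left]
  linear_combination hp' + hq' + (u y - u x) * hst

theorem mem_subgrad_zero_of_eventually_inner_le {u : EuclideanSpace ℝ (Fin n) → ℝ}
    {p : EuclideanSpace ℝ (Fin n)} (hu : ConvexOn ℝ Set.univ u) (h0 : u 0 = 0)
    (hp : ∀ᶠ y in 𝓝 0, inner ℝ p y ≤ u y) : p ∈ subgrad u Set.univ 0 := by
  set g := u - fun y => inner ℝ p y
  have hg : ConvexOn ℝ Set.univ g := hu.sub ((innerₛₗ ℝ p).concaveOn convex_univ)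
  have hmin : IsLocalMin g 0 := by
    filter_upwards [hp] with y hy
    simpa [g, h0] using hy
  intro y _
  simpa [g, h0] using IsMinOn.of_isLocalMin_of_convex_univ hmin hg y

variable {u : EuclideanSpace ℝ (Fin n) → ℝ} {j : Fin n} {a : ℝ}

theorem segment_subset_subgrad_zero (hu : ConvexOn ℝ Set.univ u) (h0 : u 0 = 0)
    (htan : ∀ᶠ y in 𝓝 0, max (a * y j) 0 ≤ u y) :
    segment ℝ 0 (a • EuclideanSpace.single j 1) ⊆ subgrad u Set.univ 0 :=
  (convex_subgrad u _ 0).segment_subset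
    (mem_subgrad_zero_of_eventually_inner_le hu h0 <| htan.mono fun y hy => by
      simpa using (le_max_right _ _).trans hy)
    (mem_subgrad_zero_of_eventually_inner_le hu h0 <| htan.mono fun y hy => by
      simpa [EuclideanSpace.inner_smul_single_one_left] using (le_max_left _ _).trans hy)

theorem subgrad_zero_subset_segment (ha : 0 < a) (h0 : u 0 = 0) {z : EuclideanSpace ℝ (Fin n)}
    {ρ : ℝ} (hρ : 0 < ρ) (hz : z j = 0) (hball : Metric.ball z ρ ⊆ {x | u x = max (a * x j) 0})
    (haxis : ∀ q ∈ subgrad u Set.univ 0, ∀ i : Fin n, i ≠ j → q i = 0) :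
    subgrad u Set.univ 0 ⊆ segment ℝ 0 (a • EuclideanSpace.single j 1) := by
  intro p hp
  have hpj := EuclideanSpace.eq_smul_single_of_apply_eq_zero (haxis p hp)
  have htest : ∀ c : ℝ, |c| < ρ → p j * c ≤ max (a * c) 0 := by
    intro c hc
    set y : EuclideanSpace ℝ (Fin n) := z + c • EuclideanSpace.single j 1
    have hyj : y j = c := by simp [y, hz]
    have hmem : y ∈ Metric.ball z ρ := by simpa [y, norm_smul] using hc
    have := hp y (Set.mem_univ y)
    rwa [h0, sub_zero, zero_add, hpj, EuclideanSpace.inner_smul_single_one_left, hyj,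
      hball hmem, hyj] at this
  obtain ⟨hb0, hba⟩ := mem_Icc_of_forall_abs_lt_mul_le_max ha.le hρ htest
  refine ⟨1 - p j / a, p j / a, by rwa [sub_nonneg, div_le_one ha], div_nonneg hb0 ha.le,
    by ring, ?_⟩
  rw [smul_zero, zero_add, smul_smul, div_mul_cancel₀ _ ha.ne', ← hpj]

end Subgradient

theorem stmt_15_general (n : ℕ) (j : Fin n)
    (ustar : EuclideanSpace ℝ (Fin n) → ℝ) (hconv : ConvexOn ℝ Set.univ ustar)
    (U : Set (EuclideanSpace ℝ (Fin n))) (hU : IsOpen U)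
    (h0U : (0 : EuclideanSpace ℝ (Fin n)) ∈ U)
    (a : ℝ) (ha : 0 < a) (h0 : ustar 0 = 0)
    (htan : ∀ x ∈ U, max (a * x j) 0 ≤ ustar x)
    (z : EuclideanSpace ℝ (Fin n)) (ρ : ℝ) (hρ : 0 < ρ) (hz : z j = 0)
    (hball : Metric.ball z ρ ⊆ {x | ustar x = max (a * x j) 0})
    (haxis : ∀ q ∈ subgrad ustar Set.univ 0, ∀ i : Fin n, i ≠ j → q i = 0) :
    subgrad ustar Set.univ 0 = segment ℝ 0 (a • EuclideanSpace.single j 1) :=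
  (subgrad_zero_subset_segment ha h0 hρ hz hball haxis).antisymm
    (segment_subset_subgrad_zero hconv h0 (mem_of_superset (hU.mem_nhds h0U) htan))

theorem stmt_15 (n : ℕ) (hn : 0 < n) (j : Fin n) (hj : (j : ℕ) = n - 1)
    (ustar : EuclideanSpace ℝ (Fin n) → ℝ) (hconv : ConvexOn ℝ Set.univ ustar)
    (U : Set (EuclideanSpace ℝ (Fin n))) (hU : IsOpen U)
    (h0U : (0 : EuclideanSpace ℝ (Fin n)) ∈ U)
    (a : ℝ) (ha : 0 < a) (h0 : ustar 0 = 0)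
    (htan : ∀ x ∈ U, max (a * x j) 0 ≤ ustar x)
    (z : EuclideanSpace ℝ (Fin n)) (ρ : ℝ) (hρ : 0 < ρ) (hz : z j = 0) (hzU : z ∈ U)
    (hball : Metric.ball z ρ ⊆ {x | ustar x = max (a * x j) 0})
    (haxis : ∀ q ∈ subgrad ustar Set.univ 0, ∀ i : Fin n, i ≠ j → q i = 0) :
    subgrad ustar Set.univ 0 = segment ℝ 0 (a • EuclideanSpace.single j 1) :=
  stmt_15_general n j ustar hconv U hU h0U a ha h0 htan z ρ hρ hz hball haxis
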